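/- For all κ ≥ 0 and k ≥ 0, J_g(κ, k) = J_g(k, κ). -/

import Mathlib

open MeasureTheory Set ENNReal

/-- `IsACgen f g` expresses that `f` is absolutely continuous on `[0,1]` with `f 0 = 0`:
`g` is its (integrable) derivative and `f t = ∫₀ᵗ g(s) ds` on `[0,1]`. -/
def IsACgen (f g : ℝ → ℝ) : Prop :=
  IntervalIntegrable g volume 0 1 ∧
  ∀ t ∈ Icc (0:ℝ) 1, f t = ∫ s in (0:ℝ)..t, g s

/-- The (extended-real-valued) energy `(1/2)∫₀¹ (f'(t))² dt` of a path with
derivative `g`. -/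
noncomputable def energyE (g : ℝ → ℝ) : ℝ≥0∞ :=
  (1 / 2 : ℝ≥0∞) * ∫⁻ t in Ioc (0:ℝ) 1, ENNReal.ofReal ((g t) ^ 2)

/-- The rate function `J_g(κ, k)` for generalized Asian options in the Black-Scholes
model: the infimum of `(1/2)∫₀¹ (f'(t))² dt` over absolutely continuous `f` with
`f(0) = 0` and `∫₀¹ exp(f(t)) dt = κ·exp(f(1)) + k`; by the `ℝ≥0∞`-convention the
infimum of the empty set is `+∞`. -/
noncomputable def Jg (κ k : ℝ) : ℝ≥0∞ :=
  sInf { E | ∃ f g : ℝ → ℝ, IsACgen f g ∧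
    (∫ t in (0:ℝ)..1, Real.exp (f t)) = κ * Real.exp (f 1) + k ∧ E = energyE g }

/-!
Time reversal `f ↦ f(1 - ·) - f(1)` is an energy-preserving involution of the admissible paths.
If `∫₀¹ exp f = κ e^{f(1)} + k`, the reversed path `h` ends at `h(1) = -f(1)` and satisfies
`∫₀¹ exp h = e^{-f(1)} ∫₀¹ exp f = k e^{h(1)} + κ`, so it is admissible for `(k, κ)`.
-/

lemma energyE_comp_one_sub_neg (g : ℝ → ℝ) : energyE (fun t => -g (1 - t)) = energyE g := by
  unfold energyE
  congr 1
  have hmp : MeasurePreserving (fun t : ℝ => 1 - t) volume volume :=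
    Measure.measurePreserving_sub_left volume 1
  have hemb : MeasurableEmbedding (fun t : ℝ => 1 - t) :=
    (MeasurableEquiv.subLeft (1 : ℝ)).measurableEmbedding
  have himage : (fun t : ℝ => 1 - t) '' Ioc 0 1 = Ico 0 1 := by
    rw [image_const_sub_Ioc]; norm_num
  calc (∫⁻ t in Ioc (0 : ℝ) 1, ENNReal.ofReal ((-g (1 - t)) ^ 2))
      = ∫⁻ t in (fun t : ℝ => 1 - t) '' Ioc 0 1, ENNReal.ofReal (g t ^ 2) := by
        rw [← hmp.setLIntegral_comp_emb hemb]; simp only [neg_sq]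
    _ = ∫⁻ t in Ioc (0 : ℝ) 1, ENNReal.ofReal (g t ^ 2) := by
        rw [himage]; exact setLIntegral_congr Ico_ae_eq_Ioc

lemma IsACgen.reverse {f g : ℝ → ℝ} (h : IsACgen f g) :
    IsACgen (fun t => f (1 - t) - f 1) (fun t => -g (1 - t)) := by
  obtain ⟨hg, hfg⟩ := h
  have hg_rev : IntervalIntegrable (fun t => g (1 - t)) volume 0 1 := by
    simpa using (hg.comp_sub_left 1).symm
  refine ⟨hg_rev.neg, fun t ht => ?_⟩
  have ht' : 1 - t ∈ Icc (0 : ℝ) 1 := ⟨by linarith [ht.2], by linarith [ht.1]⟩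
  have hg' : IntervalIntegrable g volume 0 (1 - t) :=
    hg.mono_set (uIcc_subset_uIcc_left (by rwa [uIcc_of_le zero_le_one]))
  calc f (1 - t) - f 1
      = (∫ s in (0 : ℝ)..(1 - t), g s) - ∫ s in (0 : ℝ)..1, g s := by
        rw [hfg _ ht', hfg 1 ⟨zero_le_one, le_rfl⟩]
    _ = -∫ s in (1 - t)..1, g s := by
        rw [intervalIntegral.integral_interval_sub_left hg' hg, intervalIntegral.integral_symm]
    _ = ∫ s in (0 : ℝ)..t, -g (1 - s) := by
        rw [intervalIntegral.integral_neg, intervalIntegral.integral_comp_sub_left g 1]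
        norm_num

lemma integral_exp_comp_one_sub_sub (f : ℝ → ℝ) :
    (∫ t in (0 : ℝ)..1, Real.exp (f (1 - t) - f 1))
      = (∫ t in (0 : ℝ)..1, Real.exp (f t)) * Real.exp (-f 1) := by
  simp_rw [sub_eq_add_neg (f _), Real.exp_add]
  rw [intervalIntegral.integral_mul_const,
    intervalIntegral.integral_comp_sub_left (fun u => Real.exp (f u)) 1]
  norm_num

lemma Jg_le_swap (κ k : ℝ) : Jg k κ ≤ Jg κ k := by
  refine sInf_le_sInf ?_
  rintro E ⟨f, g, hfg, hcon, rfl⟩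
  have hf0 : f 0 = 0 := by simpa using hfg.2 0 ⟨le_rfl, zero_le_one⟩
  refine ⟨_, _, hfg.reverse, ?_, (energyE_comp_one_sub_neg g).symm⟩
  rw [integral_exp_comp_one_sub_sub, hcon, sub_self, hf0, zero_sub, add_mul, mul_assoc,
    ← Real.exp_add, add_neg_cancel, Real.exp_zero]
  ring

theorem Jg_symm_general (κ k : ℝ) : Jg κ k = Jg k κ :=
  le_antisymm (Jg_le_swap k κ) (Jg_le_swap κ k)

/-- For all `κ ≥ 0` and `k ≥ 0`, `J_g(κ, k) = J_g(k, κ)`. -/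
theorem Jg_symm (κ k : ℝ) (hκ : 0 ≤ κ) (hk : 0 ≤ k) : Jg κ k = Jg k κ :=
  Jg_symm_general κ k
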